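/- Let G be a comonad on a category E and (P, σ) an oplax morphism of comonads G → G, with Q : E_G → E_G the corresponding lifted functor satisfying U_G ∘ Q = P ∘ U_G. Define H : Alg(P) → Alg(P) by H(X, s) = (GX, Gs ∘ σ(X)). Then: (1) H carries a comonad structure on Alg(P); (2) U_P ∘ H = G ∘ U_P and (U_P, id) is an oplax morphism of comonads H → G; (3) the category Alg(Q) of Q-algebras is isomorphic to the category Alg(P)_H of H-coalgebras, compatibly with the forgetful functors to E_G and to Alg(P). -/

import Mathlib

open CategoryTheory CategoryTheory.Limits

universe v u v₂ u₂

variable {E : Type u} [Category.{v} E]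

/-- `(S, σ)` is an oplax morphism of comonads `G → H`. -/
def IsOplaxMorphism {F : Type u₂} [Category.{v₂} F] (G : Comonad E) (H : Comonad F) (S : E ⥤ F)
    (σ : G.toFunctor ⋙ S ⟶ S ⋙ H.toFunctor) : Prop :=
  (∀ X : E, σ.app X ≫ H.ε.app (S.obj X) = S.map (G.ε.app X)) ∧
  (∀ X : E, σ.app X ≫ H.δ.app (S.obj X) =
      S.map (G.δ.app X) ≫ σ.app (G.obj X) ≫ H.map (σ.app X))

/-- The functor `Alg(P) ⥤ Alg(Q)` induced by a lax morphism `(H, σ) : P → Q` of endofunctors,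
sending `(X, s)` to `(HX, Hs ∘ σ X)`. -/
@[simps]
def algMap {F : Type u₂} [Category.{v₂} F] {P : E ⥤ E} {Q : F ⥤ F} (H : E ⥤ F)
    (σ : H ⋙ Q ⟶ P ⋙ H) : Endofunctor.Algebra P ⥤ Endofunctor.Algebra Q where
  obj A := ⟨H.obj A.a, σ.app A.a ≫ H.map A.str⟩
  map {A B} f :=
    { f := H.map f.f
      h := by
        have h1 := σ.naturality f.f
        dsimp at h1 ⊢
        rw [← Category.assoc, h1, Category.assoc, Category.assoc, ← H.map_comp, f.h,
          H.map_comp] }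
  map_id A := by ext; simp
  map_comp f g := by ext; simp

/-!
By the lifting condition, `Q` is the canonical lift `(A, a) ↦ (PA, σ_A ∘ Pa)` of `P` along `U_G`.
For this `Q`, a `Q`-algebra `((A, a), s)` and an `H`-coalgebra `((A, s), a)` are the same data
subject to the same equations: `s : PA → A` is a map of `G`-coalgebras exactly when
`a : A → GA` is a map of `P`-algebras `(A, s) → H(A, s)`. So the two categories are isomorphic
on the nose. The counit and comultiplication of `H` are those of `G`: the two oplax axioms on `σ`
make them maps of `P`-algebras, as they make the lift of `P` a functor into `G`-coalgebras.
-/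

namespace CategoryTheory

theorem Endofunctor.Algebra.Hom.hext {F : E ⥤ E} {X Y X' Y' : Endofunctor.Algebra F}
    (hX : X = X') (hY : Y = Y') {f : X ⟶ Y} {g : X' ⟶ Y'} (h : HEq f.f g.f) : HEq f g := by
  subst hX hY
  exact heq_of_eq (Endofunctor.Algebra.Hom.ext (eq_of_heq h))

theorem Comonad.Coalgebra.hext {G : Comonad E} {X Y : G.Coalgebra} (hA : X.A = Y.A)
    (ha : HEq X.a Y.a) : X = Y := by
  cases X; cases Y; cases hA; cases ha; rfl

theorem Comonad.Coalgebra.Hom.hext {G : Comonad E} {X Y X' Y' : G.Coalgebra} (hX : X = X')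
    (hY : Y = Y') {f : X ⟶ Y} {g : X' ⟶ Y'} (h : HEq f.f g.f) : HEq f g := by
  subst hX hY
  exact heq_of_eq (Comonad.Coalgebra.Hom.ext (eq_of_heq h))

end CategoryTheory

namespace IsOplaxMorphism

variable {G : Comonad E} {P : E ⥤ E} {σ : G.toFunctor ⋙ P ⟶ P ⋙ G.toFunctor}
  (hσ : IsOplaxMorphism G G P σ)

def algebraComonad : Comonad (Endofunctor.Algebra P) where
  toFunctor := algMap G.toFunctor σ
  ε :=
    { app A :=
        { f := G.ε.app A.a
          h := by
            show P.map (G.ε.app A.a) ≫ A.str = (σ.app A.a ≫ G.map A.str) ≫ G.ε.app A.a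
            rw [← hσ.1 A.a, Category.assoc, Category.assoc, G.ε.naturality A.str]
            rfl }
      naturality _ _ f := by ext; exact G.ε.naturality f.f }
  δ :=
    { app A :=
        { f := G.δ.app A.a
          h := by
            show P.map (G.δ.app A.a) ≫ σ.app (G.obj A.a) ≫ G.map (σ.app A.a ≫ G.map A.str) =
              (σ.app A.a ≫ G.map A.str) ≫ G.δ.app A.a
            rw [Category.assoc (σ.app A.a), G.δ.naturality A.str, ← Category.assoc (σ.app A.a),
              hσ.2 A.a]
            simp }
      naturality _ _ f := by ext; exact G.δ.naturality f.f }
  coassoc A := by ext; exact G.coassoc A.a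
  left_counit A := by ext; exact G.left_counit A.a
  right_counit A := by ext; exact G.right_counit A.a

theorem isOplaxMorphism_forget :
    IsOplaxMorphism hσ.algebraComonad G (Endofunctor.Algebra.forget P) (𝟙 _) :=
  ⟨fun _ => Category.id_comp _, fun X => by
    show 𝟙 _ ≫ G.δ.app X.a = G.δ.app X.a ≫ 𝟙 _ ≫ G.map (𝟙 _)
    simp⟩

def liftCoalgebra : G.Coalgebra ⥤ G.Coalgebra where
  obj A :=
    { A := P.obj A.A
      a := P.map A.a ≫ σ.app A.A
      counit := by rw [Category.assoc, hσ.1, ← P.map_comp, A.counit, P.map_id]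
      coassoc := by
        rw [Category.assoc, hσ.2, ← P.map_comp_assoc, A.coassoc, P.map_comp_assoc]
        simp only [Functor.map_comp, Category.assoc]
        exact congrArg _ (σ.naturality_assoc A.a _) }
  map f :=
    { f := P.map f.f
      h := by
        have hσf : P.map (G.map f.f) ≫ σ.app _ = σ.app _ ≫ G.map (P.map f.f) := σ.naturality f.f
        dsimp
        rw [Category.assoc, ← hσf, ← P.map_comp_assoc, f.h, P.map_comp_assoc] }

theorem eq_liftCoalgebra (Q : G.Coalgebra ⥤ G.Coalgebra) (hQ : Q ⋙ G.forget = G.forget ⋙ P)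
    (hQa : ∀ A : G.Coalgebra, HEq (Q.obj A).a (P.map A.a ≫ σ.app A.A)) :
    Q = hσ.liftCoalgebra :=
  have hobj A : Q.obj A = hσ.liftCoalgebra.obj A :=
    Comonad.Coalgebra.hext (Functor.congr_obj hQ A) (hQa A)
  Functor.hext hobj fun A B f =>
    Comonad.Coalgebra.Hom.hext (hobj A) (hobj B) (Functor.hcongr_hom hQ f)

def coalgebraOfAlgebra : Endofunctor.Algebra hσ.liftCoalgebra ⥤ hσ.algebraComonad.Coalgebra where
  obj X :=
    { A := ⟨X.a.A, X.str.f⟩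
      a := ⟨X.a.a, (Category.assoc _ _ _).symm.trans X.str.h⟩
      counit := by ext; exact X.a.counit
      coassoc := by ext; exact X.a.coassoc }
  map f :=
    { f := ⟨f.f.f, congrArg Comonad.Coalgebra.Hom.f f.h⟩
      h := by ext; exact f.f.h }

def algebraOfCoalgebra : hσ.algebraComonad.Coalgebra ⥤ Endofunctor.Algebra hσ.liftCoalgebra where
  obj Y :=
    { a :=
        { A := Y.A.a
          a := Y.a.f
          counit := congrArg Endofunctor.Algebra.Hom.f Y.counit
          coassoc := congrArg Endofunctor.Algebra.Hom.f Y.coassoc }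
      str := ⟨Y.A.str, (Category.assoc _ _ _).trans Y.a.h⟩ }
  map g :=
    { f := ⟨g.f.f, congrArg Endofunctor.Algebra.Hom.f g.h⟩
      h := by ext; exact g.f.h }

theorem coalgebraOfAlgebra_comp_algebraOfCoalgebra :
    hσ.coalgebraOfAlgebra ⋙ hσ.algebraOfCoalgebra = 𝟭 _ :=
  rfl

theorem algebraOfCoalgebra_comp_coalgebraOfAlgebra :
    hσ.algebraOfCoalgebra ⋙ hσ.coalgebraOfAlgebra = 𝟭 _ :=
  rfl

theorem liftCoalgebra_comp_forget : hσ.liftCoalgebra ⋙ G.forget = G.forget ⋙ P :=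
  rfl

theorem coalgebraOfAlgebra_comp_forget :
    hσ.coalgebraOfAlgebra ⋙ Comonad.forget hσ.algebraComonad =
      algMap G.forget (eqToHom hσ.liftCoalgebra_comp_forget.symm) :=
  have hobj X : (hσ.coalgebraOfAlgebra ⋙ Comonad.forget _).obj X = (algMap G.forget _).obj X :=
    congrArg (Endofunctor.Algebra.mk _) (Category.id_comp _).symm
  Functor.hext hobj fun X Y _ => Endofunctor.Algebra.Hom.hext (hobj X) (hobj Y) HEq.rfl

end IsOplaxMorphism

/-- given an oplax morphism of comonads `(P, σ) : G → G` with lifted endofunctor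
`Q` on `E_G`, the functor `H : Alg(P) ⥤ Alg(P)`, `H(X, s) = (GX, Gs ∘ σ X)`, carries a comonad
structure; `U_P ∘ H = G ∘ U_P` and `(U_P, id)` is an oplax morphism `H → G`; and `Alg(Q)` is
isomorphic to the category of `H`-coalgebras compatibly with the forgetful functors. -/
theorem algebras_in_coalgebras (G : Comonad E) (P : E ⥤ E)
    (σ : G.toFunctor ⋙ P ⟶ P ⋙ G.toFunctor) (hσ : IsOplaxMorphism G G P σ)
    (Q : G.Coalgebra ⥤ G.Coalgebra) (hQ : Q ⋙ G.forget = G.forget ⋙ P)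
    (hQobj : ∀ A : G.Coalgebra,
      (Q.obj A).A = P.obj A.A ∧ HEq (Q.obj A).a (P.map A.a ≫ σ.app A.A)) :
    ∃ (Hc : Comonad (Endofunctor.Algebra P)) (hHc : Hc.toFunctor = algMap G.toFunctor σ)
      (hU : Hc.toFunctor ⋙ Endofunctor.Algebra.forget P =
        Endofunctor.Algebra.forget P ⋙ G.toFunctor),
      IsOplaxMorphism Hc G (Endofunctor.Algebra.forget P) (eqToHom hU) ∧
      ∃ (K : Endofunctor.Algebra Q ⥤ Hc.Coalgebra)
        (K' : Hc.Coalgebra ⥤ Endofunctor.Algebra Q),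
        K ⋙ K' = 𝟭 _ ∧ K' ⋙ K = 𝟭 _ ∧
        K ⋙ Comonad.forget Hc = algMap G.forget (eqToHom hQ.symm) ∧
        (∀ X : Endofunctor.Algebra Q, HEq ((K.obj X).a.f) X.a.a) := by
  obtain rfl := hσ.eq_liftCoalgebra Q hQ fun A => (hQobj A).2
  exact ⟨hσ.algebraComonad, rfl, rfl, hσ.isOplaxMorphism_forget, hσ.coalgebraOfAlgebra,
    hσ.algebraOfCoalgebra, hσ.coalgebraOfAlgebra_comp_algebraOfCoalgebra,
    hσ.algebraOfCoalgebra_comp_coalgebraOfAlgebra, hσ.coalgebraOfAlgebra_comp_forget,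
    fun _ => HEq.rfl⟩
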